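/- arXiv:1707.05700 — 4 statements merged into one kernel-verified Lean document; each statement's English description precedes it below -/
import Mathlib

section
/- Let X be a type, let e be a permutation of X, and let m ≥ 1 be an integer with e^m = id. Let σ denote the induced automorphism of the free abelian group ℤ[X] of finitely supported functions X → ℤ, given by permuting the basis, (σγ)(x) = γ(e⁻¹(x)). If γ ∈ ℤ[X] satisfies σ⁰(γ) + σ¹(γ) + ⋯ + σ^{m−1}(γ) = 0, then there exists δ ∈ ℤ[X] with γ = σ(δ) − δ. -/
/-!
Let `σ` be the automorphism of `X →₀ M` induced by `e`, and let `π : (X →₀ M) → (X/⟨e⟩ →₀ M)`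
add up the coefficients over each `e`-orbit. Since `π ∘ σ = π`, the hypothesis gives
`m • π γ = π (∑ i < m, σ^i γ) = 0`, so `π γ = 0` by torsion-freeness. Conversely, `ker π` lies
in the image of `σ - 1`: moving a coefficient from `x` to `eⁿ x` changes `γ` by the telescoping
sum `σⁿ δ - δ = ∑ i < n, (σ - 1) σ^i δ`, and moving every coefficient to a chosen representative
of its orbit turns an element of `ker π` into `0`.
-/

open Finset Finsupp

theorem Finsupp.sub_mapDomain_mem {X M : Type*} [AddCommGroup M] {K : AddSubgroup (X →₀ M)}
    {f : X → X} (hf : ∀ x a, single x a - single (f x) a ∈ K) (γ : X →₀ M) :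
    γ - mapDomain f γ ∈ K := by
  induction γ using Finsupp.induction_linear with
  | zero => simp
  | add γ₁ γ₂ h₁ h₂ =>
    rw [mapDomain_add, add_sub_add_comm]
    exact K.add_mem h₁ h₂
  | single x a =>
    rw [mapDomain_single]
    exact hf x a

namespace Equiv.Perm

variable {X M : Type*} [AddCommGroup M]

noncomputable def finsuppCoboundaries (e : Perm X) : AddSubgroup (X →₀ M) :=
  ((Finsupp.domCongr e : (X →₀ M) ≃+ (X →₀ M)).toAddMonoidHom - AddMonoidHom.id _).range

variable {e : Perm X}

theorem mem_finsuppCoboundaries {γ : X →₀ M} :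
    γ ∈ e.finsuppCoboundaries ↔ ∃ δ, equivMapDomain e δ - δ = γ := by
  simp [finsuppCoboundaries]

theorem equivMapDomain_pow_sub_mem_finsuppCoboundaries (n : ℕ) (δ : X →₀ M) :
    equivMapDomain (e ^ n) δ - δ ∈ e.finsuppCoboundaries := by
  have htelescope := sum_range_sub (fun i => equivMapDomain (e ^ i) δ) n
  rw [pow_zero, one_def, equivMapDomain_refl] at htelescope
  rw [← htelescope]
  refine sum_mem fun i _ => mem_finsuppCoboundaries.mpr ⟨equivMapDomain (e ^ i) δ, ?_⟩
  rw [pow_succ', mul_def, equivMapDomain_trans]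

theorem SameCycle.single_sub_single_mem_finsuppCoboundaries {x y : X} (h : e.SameCycle x y)
    (a : M) : single y a - single x a ∈ e.finsuppCoboundaries := by
  obtain ⟨k, rfl⟩ := h
  obtain ⟨n, rfl | rfl⟩ := Int.eq_nat_or_neg k
  · simpa [equivMapDomain_single] using
      equivMapDomain_pow_sub_mem_finsuppCoboundaries n (single x a)
  · have hx : (e ^ n) ((e ^ (-(n : ℤ))) x) = x := by
      rw [← zpow_natCast, ← mul_apply, ← zpow_add, add_neg_cancel, zpow_zero, one_apply]
    rw [← neg_sub]
    refine neg_mem ?_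
    have hmem := equivMapDomain_pow_sub_mem_finsuppCoboundaries (e := e) n
      (single ((e ^ (-(n : ℤ))) x) a)
    rwa [equivMapDomain_single, hx] at hmem

theorem mem_finsuppCoboundaries_of_mapDomain_mk_eq_zero {γ : X →₀ M}
    (hγ : mapDomain (Quotient.mk (SameCycle.setoid e)) γ = 0) : γ ∈ e.finsuppCoboundaries := by
  have hrep := sub_mapDomain_mem (K := e.finsuppCoboundaries) (fun x a =>
    (Quotient.mk_out (s := SameCycle.setoid e) x).single_sub_single_mem_finsuppCoboundaries a) γ
  change γ - mapDomain (Quotient.out ∘ Quotient.mk _) γ ∈ _ at hrep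
  rwa [mapDomain_comp, hγ, mapDomain_zero, sub_zero] at hrep

theorem mapDomain_mk_equivMapDomain_pow (n : ℕ) (γ : X →₀ M) :
    mapDomain (Quotient.mk (SameCycle.setoid e)) (equivMapDomain (e ^ n) γ) =
      mapDomain (Quotient.mk (SameCycle.setoid e)) γ := by
  rw [equivMapDomain_eq_mapDomain, ← mapDomain_comp]
  exact mapDomain_congr fun x _ => Quotient.sound (sameCycle_pow_left.mpr (SameCycle.refl e x))

theorem mapDomain_mk_eq_zero_of_sum_pow_eq_zero [IsAddTorsionFree M] {m : ℕ} (hm : m ≠ 0)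
    {γ : X →₀ M} (hsum : ∑ i ∈ range m, equivMapDomain (e ^ i) γ = 0) :
    mapDomain (Quotient.mk (SameCycle.setoid e)) γ = 0 := by
  refine (nsmul_eq_zero_iff_right hm).mp ?_
  calc m • mapDomain (Quotient.mk (SameCycle.setoid e)) γ
      = ∑ i ∈ range m,
          mapDomain (Quotient.mk (SameCycle.setoid e)) (equivMapDomain (e ^ i) γ) := by
        simp [mapDomain_mk_equivMapDomain_pow]
    _ = 0 := by rw [← mapDomain_finsetSum, hsum, mapDomain_zero]

end Equiv.Perm

theorem statement4_general {X : Type*} (e : Equiv.Perm X) (m : ℕ) (hm : 1 ≤ m)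
    (γ : X →₀ ℤ)
    (hsum : ∑ i ∈ Finset.range m, Finsupp.equivMapDomain (e ^ i) γ = 0) :
    ∃ δ : X →₀ ℤ, γ = Finsupp.equivMapDomain e δ - δ := by
  have hπ := Equiv.Perm.mapDomain_mk_eq_zero_of_sum_pow_eq_zero (by omega) hsum
  obtain ⟨δ, hδ⟩ := Equiv.Perm.mem_finsuppCoboundaries.mp
    (Equiv.Perm.mem_finsuppCoboundaries_of_mapDomain_mk_eq_zero hπ)
  exact ⟨δ, hδ.symm⟩

/-- Let `e` be a permutation of `X` with `e ^ m = 1` for some `m ≥ 1`, and let `σ` be the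
induced automorphism of the free abelian group `ℤ[X] = X →₀ ℤ` permuting the basis,
`(σ γ)(x) = γ(e⁻¹ x)`, i.e. `σ = Finsupp.equivMapDomain e`.  If
`σ⁰(γ) + σ¹(γ) + ⋯ + σ^{m−1}(γ) = 0` then `γ = σ(δ) − δ` for some `δ`. -/
theorem statement4 {X : Type*} (e : Equiv.Perm X) (m : ℕ) (hm : 1 ≤ m)
    (he : e ^ m = 1) (γ : X →₀ ℤ)
    (hsum : ∑ i ∈ Finset.range m, Finsupp.equivMapDomain (e ^ i) γ = 0) :
    ∃ δ : X →₀ ℤ, γ = Finsupp.equivMapDomain e δ - δ :=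
  statement4_general e m hm γ hsum
end

section
/- Let d ≥ 1 be an integer and let c, ε : ℤ/dℤ → ℤ be functions such that the sum of c(j) over all j ∈ ℤ/dℤ is ≤ 0. Then there exists a function x : ℤ/dℤ → ℤ satisfying x(j) ≥ ε(j) and x(j) ≥ x(j−1) + c(j) for every j ∈ ℤ/dℤ. -/
/-!
Read `x (p j) + c j ≤ x j` as a longest-path problem on the functional graph of `p`: any
solution dominates the weight `ε (pⁿ j) + ∑_{t<n} c (pᵗ j)` of every walk out of `j`, and
conversely the supremum of these walk weights is a solution as soon as it is finite. For
`p = (· - 1)` on `ℤ/dℤ` every walk is periodic with period weight `∑ c ≤ 0`, so walks of length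
`≥ d` never beat shorter ones and the supremum is a maximum over `n < d`.
-/

open Finset Function

section
variable {α : Type*} (p : α → α) (c ε : α → ℤ)

def pathWeight (j : α) (n : ℕ) : ℤ :=
  ε (p^[n] j) + ∑ t ∈ range n, c (p^[t] j)

variable {p c ε}

@[simp]
lemma pathWeight_zero (j : α) : pathWeight p c ε j 0 = ε j := by
  simp [pathWeight]

lemma pathWeight_succ (j : α) (n : ℕ) :
    pathWeight p c ε j (n + 1) = pathWeight p c ε (p j) n + c j := by
  simp only [pathWeight, iterate_succ_apply, sum_range_succ', iterate_zero_apply]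
  ring

lemma pathWeight_add (j : α) (m n : ℕ) :
    pathWeight p c ε j (m + n) = ∑ t ∈ range m, c (p^[t] j) + pathWeight p c ε (p^[m] j) n := by
  simp only [pathWeight, sum_range_add, ← iterate_add_apply, add_comm n m]
  simp only [add_comm m]
  ring

lemma bddAbove_range_pathWeight {d : ℕ} (hd : 0 < d) {j : α} (hj : IsPeriodicPt p d j)
    (hc : ∑ t ∈ range d, c (p^[t] j) ≤ 0) :
    BddAbove (Set.range (pathWeight p c ε j)) := by
  obtain ⟨M, hM⟩ := ((range d).image (pathWeight p c ε j)).bddAbove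
  refine ⟨M, Set.forall_mem_range.2 fun n => ?_⟩
  induction n using Nat.strong_induction_on with | _ n ih
  by_cases hn : n < d
  · exact hM (mem_coe.2 (mem_image_of_mem _ (mem_range.2 hn)))
  · obtain ⟨m, rfl⟩ := Nat.exists_eq_add_of_le (not_lt.1 hn)
    have := ih m (by omega)
    rw [pathWeight_add, hj.eq]
    linarith

theorem exists_ge_of_bddAbove_pathWeight (h : ∀ j, BddAbove (Set.range (pathWeight p c ε j))) :
    ∃ x : α → ℤ, ∀ j, ε j ≤ x j ∧ x (p j) + c j ≤ x j := by
  refine ⟨fun j => ⨆ n, pathWeight p c ε j n, fun j => ⟨?_, ?_⟩⟩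
  · simpa using le_ciSup (h j) 0
  · rw [← le_sub_iff_add_le]
    refine ciSup_le fun n => le_sub_iff_add_le.2 ?_
    rw [← pathWeight_succ]
    exact le_ciSup (h j) (n + 1)

end

lemma ZMod.sum_range_natCast {M : Type*} [AddCommMonoid M] (d : ℕ) [NeZero d] (f : ZMod d → M) :
    ∑ t ∈ range d, f t = ∑ i, f i :=
  sum_nbij' (↑) ZMod.val (by simp) (fun a _ => mem_range.2 a.val_lt)
    (fun _ ha => ZMod.val_natCast_of_lt (mem_range.1 ha)) (fun a _ => ZMod.natCast_zmod_val a)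
    fun _ _ => rfl

lemma sub_one_iterate {G : Type*} [AddCommGroupWithOne G] (n : ℕ) (j : G) :
    (· - 1)^[n] j = j - n := by
  induction n with
  | zero => simp
  | succ n ih => rw [iterate_succ_apply', ih, Nat.cast_succ, sub_sub]

/-- For `d ≥ 1` and functions `c, ε : ℤ/dℤ → ℤ` with `∑ c ≤ 0`, there is a function
`x : ℤ/dℤ → ℤ` with `x j ≥ ε j` and `x j ≥ x (j-1) + c j` for all `j`. -/
theorem statement5 (d : ℕ) [NeZero d] (c ε : ZMod d → ℤ)
    (hc : ∑ j : ZMod d, c j ≤ 0) :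
    ∃ x : ZMod d → ℤ, ∀ j : ZMod d, ε j ≤ x j ∧ x (j - 1) + c j ≤ x j := by
  refine exists_ge_of_bddAbove_pathWeight fun j =>
    bddAbove_range_pathWeight (Nat.pos_of_neZero d) (j := j) ?_ ?_
  · rw [IsPeriodicPt, IsFixedPt, sub_one_iterate, ZMod.natCast_self, sub_zero]
  · simp only [sub_one_iterate]
    rw [ZMod.sum_range_natCast d (fun t => c (j - t))]
    exact ((Equiv.subLeft j).sum_comp c).trans_le hc
end

section
/- Let d ≥ 1 be an integer and let c, ε : ℤ/dℤ → ℤ be functions such that the sum of c(j) over all j ∈ ℤ/dℤ is ≤ 0. Let S be the set of functions x : ℤ/dℤ → ℤ satisfying x(j) ≥ ε(j) and x(j) ≥ x(j−1) + c(j) for every j ∈ ℤ/dℤ. Then S is nonempty, S has a (necessarily unique) least element x* for the pointwise order, and this least element satisfies x*(j) = ε(j) for at least one j ∈ ℤ/dℤ. -/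
/-- For `d ≥ 1` and functions `c, ε : ℤ/dℤ → ℤ` with `∑ c ≤ 0`, the set of functions
`x : ℤ/dℤ → ℤ` with `x j ≥ ε j` and `x j ≥ x (j-1) + c j` for all `j` is nonempty, has a
(necessarily unique) least element for the pointwise order, and this least element
satisfies `x* j = ε j` for at least one `j`. -/
theorem statement6 (d : ℕ) [NeZero d] (c ε : ZMod d → ℤ)
    (hc : ∑ j : ZMod d, c j ≤ 0) :
    ∃ xstar : ZMod d → ℤ,
      IsLeast {x : ZMod d → ℤ | ∀ j : ZMod d, ε j ≤ x j ∧ x (j - 1) + c j ≤ x j} xstar ∧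
        ∃ j : ZMod d, xstar j = ε j := by
  have hd : 0 < d := Nat.pos_of_ne_zero (NeZero.ne d)
  have hne : (Finset.range d).Nonempty := Finset.nonempty_range_iff.mpr (NeZero.ne d)
  set f : ZMod d → ℕ → ℤ :=
    fun j m => ε (j - (m : ZMod d)) + ∑ i ∈ Finset.range m, c (j - (i : ZMod d)) with hf
  have hf0 : ∀ j, f j 0 = ε j := by intro j; simp [hf]
  have hstep : ∀ j m, f j (m + 1) = f (j - 1) m + c j := by
    intro j m
    have h1 : ∀ i : ℕ, j - ((i + 1 : ℕ) : ZMod d) = (j - 1) - (i : ZMod d) := by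
      intro i; push_cast; ring
    simp only [hf, Finset.sum_range_succ', h1, Nat.cast_zero, sub_zero]
    ring
  have hfd : ∀ j, f j d = ε j + ∑ k : ZMod d, c k := by
    intro j
    have hdz : ((d : ℕ) : ZMod d) = 0 := ZMod.natCast_self d
    have hsum : ∑ i ∈ Finset.range d, c (j - (i : ZMod d)) = ∑ k : ZMod d, c k := by
      rw [show ∑ i ∈ Finset.range d, c (j - (i : ZMod d))
            = ∑ k : ZMod d, c (j - k) from ?_]
      · exact Fintype.sum_equiv (Equiv.subLeft j) (fun k => c (j - k)) c (fun x => rfl)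
      · refine Finset.sum_nbij' (fun i => (i : ZMod d)) (fun k => k.val) ?_ ?_ ?_ ?_ ?_
        · intro i _; exact Finset.mem_univ _
        · intro k _; exact Finset.mem_range.mpr (ZMod.val_lt k)
        · intro i hi; exact ZMod.val_cast_of_lt (Finset.mem_range.mp hi)
        · intro k _; exact ZMod.natCast_rightInverse k
        · intro i _; rfl
    simp [hf, hdz, hsum]
  set xstar : ZMod d → ℤ := fun j => (Finset.range d).sup' hne (f j) with hx
  have hle : ∀ j m, m ∈ Finset.range d → f j m ≤ xstar j := by
    intro j m hm; exact Finset.le_sup' (f j) hm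
  have hmem : ∀ j : ZMod d, ε j ≤ xstar j ∧ xstar (j - 1) + c j ≤ xstar j := by
    intro j
    constructor
    · rw [← hf0 j]; exact hle j 0 (Finset.mem_range.mpr hd)
    · rw [← sub_nonneg, show xstar j - (xstar (j - 1) + c j)
        = (xstar j - c j) - xstar (j - 1) by ring, sub_nonneg]
      refine Finset.sup'_le hne _ (fun m hm => ?_)
      rw [le_sub_iff_add_le, ← hstep j m]
      rcases Nat.lt_or_ge (m + 1) d with h | h
      · exact hle j (m + 1) (Finset.mem_range.mpr h)
      · have hm' : m + 1 = d := le_antisymm (Nat.succ_le_of_lt (Finset.mem_range.mp hm)) h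
        rw [hm', hfd j]
        calc ε j + ∑ k : ZMod d, c k ≤ ε j + 0 := by linarith
          _ = f j 0 := by rw [add_zero, hf0]
          _ ≤ xstar j := hle j 0 (Finset.mem_range.mpr hd)
  have hlb : ∀ x ∈ {x : ZMod d → ℤ | ∀ j : ZMod d, ε j ≤ x j ∧ x (j - 1) + c j ≤ x j},
      xstar ≤ x := by
    intro x hxS
    have key : ∀ m, ∀ j, f j m ≤ x j := by
      intro m
      induction m with
      | zero => intro j; rw [hf0]; exact (hxS j).1
      | succ n ih =>
        intro j
        rw [hstep j n]
        calc f (j - 1) n + c j ≤ x (j - 1) + c j := by linarith [ih (j - 1)]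
          _ ≤ x j := (hxS j).2
    intro j
    exact Finset.sup'_le hne (f j) (fun m _ => key m j)
  refine ⟨xstar, ⟨hmem, hlb⟩, ?_⟩
  by_contra h
  push_neg at h
  have hstrict : ∀ j, ε j ≤ xstar j - 1 := by
    intro j
    have := (hmem j).1
    have := h j
    omega
  have hx' : (fun j => xstar j - 1) ∈
      {x : ZMod d → ℤ | ∀ j : ZMod d, ε j ≤ x j ∧ x (j - 1) + c j ≤ x j} := by
    intro j
    exact ⟨hstrict j, by simp only []; have := (hmem j).2; omega⟩
  have := hlb _ hx' 0
  simp only [] at this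
  omega
end

section
/- Let G be a group of order 2 acting on the multiplicative group ℂˣ of nonzero complex numbers by letting the nontrivial element act by z ↦ (z̄)⁻¹, the inverse of the complex conjugate. Then the first group cohomology H¹(G, ℂˣ) is isomorphic to ℤ/2ℤ. -/
/-!
For `G = {1, g}` a 1-cocycle `f` is determined by `z = f g`, the only constraint being
`g • z = -z`, i.e. `(conj z)⁻¹ = z⁻¹` multiplicatively: the cocycles are the real units. The
coboundaries take the values `g • x - x = (conj x)⁻¹ / x = |x|⁻²` at `g`, i.e. exactly the
positive reals. So `H¹ ≅ ℝˣ / ℝ_{>0}` has two elements, the classes of the cocycles with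
`z = 1` and `z = -1`, and a group of order two is `ℤ/2ℤ`.
-/

open ComplexConjugate ComplexOrder

section CardTwo

variable {G : Type*} [Group G] [Fintype G]

theorem eq_one_or_eq_of_card_eq_two (hG : Fintype.card G = 2) {g : G} (hg : g ≠ 1) (x : G) :
    x = 1 ∨ x = g := by
  classical
  by_contra! hx
  have : ({1, g, x} : Finset G).card ≤ 2 := hG ▸ Finset.card_le_univ _
  rw [Finset.card_insert_of_notMem (by simp [hg.symm, hx.1.symm]),
    Finset.card_pair hx.2.symm] at this
  omega

theorem mul_self_eq_one_of_card_eq_two (hG : Fintype.card G = 2) (g : G) : g * g = 1 := by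
  rw [← sq, ← hG, pow_card_eq_one]

end CardTwo

namespace groupCohomology

universe u

variable {k G : Type u} [CommRing k] [Group G] {A : Rep k G}

theorem cocycles₁_map_of_mul_self_eq_one (f : cocycles₁ A) {g : G} (hg : g * g = 1) :
    A.ρ g (f g) = -f g := by
  simpa [inv_eq_of_mul_eq_one_right hg] using cocycles₁_map_inv f g

variable [Fintype G]

theorem mem_coboundaries₁_iff_of_card_eq_two (hG : Fintype.card G = 2) {g : G} (hg : g ≠ 1)
    (f : cocycles₁ A) : ⇑f ∈ coboundaries₁ A ↔ ∃ x : A, A.ρ g x - x = f g := by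
  constructor
  · rintro ⟨x, hx⟩
    exact ⟨x, congrFun hx g⟩
  · rintro ⟨x, hx⟩
    refine ⟨x, funext fun y => ?_⟩
    rcases eq_one_or_eq_of_card_eq_two hG hg y with rfl | rfl
    · simp
    · exact hx

theorem exists_cocycles₁_apply_eq_of_card_eq_two (hG : Fintype.card G = 2) {g : G} (hg : g ≠ 1)
    {z : A} (hz : A.ρ g z = -z) : ∃ f : cocycles₁ A, f g = z := by
  classical
  refine ⟨⟨fun x => if x = 1 then 0 else z, (mem_cocycles₁_iff _).2 fun a b => ?_⟩, if_neg hg⟩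
  have hgg := mul_self_eq_one_of_card_eq_two hG g
  rcases eq_one_or_eq_of_card_eq_two hG hg a with rfl | rfl <;>
    rcases eq_one_or_eq_of_card_eq_two hG hg b with rfl | rfl <;>
    simp [hg, hgg, hz]

end groupCohomology

namespace Complex

theorem units_map_conj_inv_eq_inv_iff (z : ℂˣ) :
    (Units.map (starRingEnd ℂ).toMonoidHom z)⁻¹ = z⁻¹ ↔ conj (z : ℂ) = z := by
  rw [inv_inj, Units.ext_iff]
  rfl

theorem exists_units_map_conj_inv_div_eq_iff (z : ℂˣ) :
    (∃ x : ℂˣ, (Units.map (starRingEnd ℂ).toMonoidHom x)⁻¹ / x = z) ↔ 0 < (z : ℂ) := by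
  constructor
  · rintro ⟨x, rfl⟩
    have hval : (((Units.map (starRingEnd ℂ).toMonoidHom x)⁻¹ / x : ℂˣ) : ℂ) =
        ((normSq x)⁻¹ : ℝ) := by
      simp only [Units.val_div_eq_div_val, Units.val_inv_eq_inv_val, Units.coe_map,
        RingHom.toMonoidHom_eq_coe, MonoidHom.coe_coe]
      rw [ofReal_inv, ← mul_conj, div_eq_mul_inv, ← mul_inv, mul_comm]
    rw [hval, zero_lt_real]
    exact inv_pos.2 (normSq_pos.2 x.ne_zero)
  · intro hz
    obtain ⟨r, hr⟩ := conj_eq_iff_real.1 (conj_eq_iff_im.2 (pos_iff.1 hz).2.symm)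
    have hr0 : 0 < r := zero_lt_real.1 (hr ▸ hz)
    refine ⟨Units.mk0 ((√r)⁻¹ : ℝ) (by simp [(Real.sqrt_pos.2 hr0).ne']), Units.ext ?_⟩
    simp [hr, ← ofReal_mul, Real.mul_self_sqrt hr0.le]

theorem pos_or_neg_pos_of_conj_eq {z : ℂ} (hz : conj z = z) (h0 : z ≠ 0) : 0 < z ∨ 0 < -z := by
  obtain ⟨r, rfl⟩ := conj_eq_iff_real.1 hz
  rw [← ofReal_neg, zero_lt_real, zero_lt_real, neg_pos]
  exact (ofReal_ne_zero.1 h0).lt_or_gt.symm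

end Complex

section ConjInvAction

open groupCohomology Additive

variable {G : Type} [Group G] [Fintype G] {g : G} {ρ : Representation ℤ G (Additive ℂˣ)}

theorem conj_eq_of_cocycles₁_apply_eq (hG : Fintype.card G = 2)
    (hρ : ∀ z : ℂˣ, ρ g (ofMul z) = ofMul ((Units.map (starRingEnd ℂ).toMonoidHom z)⁻¹))
    (f : cocycles₁ (Rep.of ρ)) {z : ℂˣ} (hz : f g = ofMul z) : conj (z : ℂ) = z := by
  have h := cocycles₁_map_of_mul_self_eq_one f (mul_self_eq_one_of_card_eq_two hG g)
  rw [hz, Rep.of_ρ, hρ, ← ofMul_inv] at h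
  exact (Complex.units_map_conj_inv_eq_inv_iff z).1 (ofMul.injective h)

theorem mem_coboundaries₁_iff_zero_lt (hG : Fintype.card G = 2) (hg : g ≠ 1)
    (hρ : ∀ z : ℂˣ, ρ g (ofMul z) = ofMul ((Units.map (starRingEnd ℂ).toMonoidHom z)⁻¹))
    (f : cocycles₁ (Rep.of ρ)) {z : ℂˣ} (hz : f g = ofMul z) :
    ⇑f ∈ coboundaries₁ (Rep.of ρ) ↔ 0 < (z : ℂ) := by
  rw [mem_coboundaries₁_iff_of_card_eq_two hG hg, ← Complex.exists_units_map_conj_inv_div_eq_iff,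
    (ofMul (α := ℂˣ)).surjective.exists]
  refine exists_congr fun x => ?_
  rw [hz, Rep.of_ρ, hρ, ← ofMul_div, ofMul.injective.eq_iff]

theorem exists_cocycles₁_apply_eq_neg_one (hG : Fintype.card G = 2) (hg : g ≠ 1)
    (hρ : ∀ z : ℂˣ, ρ g (ofMul z) = ofMul ((Units.map (starRingEnd ℂ).toMonoidHom z)⁻¹)) :
    ∃ f : cocycles₁ (Rep.of ρ), f g = ofMul (-1 : ℂˣ) := by
  refine exists_cocycles₁_apply_eq_of_card_eq_two hG hg ?_
  rw [Rep.of_ρ, hρ, ← ofMul_inv]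
  congr 1
  ext
  simp

theorem card_H1_eq_two (hG : Fintype.card G = 2) (hg : g ≠ 1)
    (hρ : ∀ z : ℂˣ, ρ g (ofMul z) = ofMul ((Units.map (starRingEnd ℂ).toMonoidHom z)⁻¹)) :
    Nat.card (H1 (Rep.of ρ)) = 2 := by
  obtain ⟨f₀, hf₀⟩ := exists_cocycles₁_apply_eq_neg_one hG hg hρ
  refine Nat.card_eq_two_iff.2 ⟨0, H1π _ f₀, ?_, ?_⟩
  · rw [ne_comm, Ne, H1π_eq_zero_iff, mem_coboundaries₁_iff_zero_lt hG hg hρ f₀ hf₀]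
    simpa using not_lt_of_gt zero_lt_one
  · refine Set.eq_univ_of_forall fun c => H1_induction_on c fun f => ?_
    obtain ⟨z, hz⟩ : ∃ z : ℂˣ, f g = ofMul z := ⟨_, rfl⟩
    rcases Complex.pos_or_neg_pos_of_conj_eq (conj_eq_of_cocycles₁_apply_eq hG hρ f hz)
      z.ne_zero with hpos | hneg
    · left
      rwa [H1π_eq_zero_iff, mem_coboundaries₁_iff_zero_lt hG hg hρ f hz]
    · right
      have hdiff : (f - f₀) g = ofMul (-z) := by
        change f g - f₀ g = _
        rw [hz, hf₀, ← ofMul_div, div_neg, div_one]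
      rw [Set.mem_singleton_iff, ← sub_eq_zero, ← map_sub, H1π_eq_zero_iff,
        mem_coboundaries₁_iff_zero_lt hG hg hρ _ hdiff]
      simpa using hneg

end ConjInvAction

/-- Let `G` be a group of order `2` acting on the multiplicative group `ℂˣ` so that the
nontrivial element acts by `z ↦ (conj z)⁻¹` (written additively via `Additive ℂˣ`, so that
the action is a representation of `G` on the `ℤ`-module `Additive ℂˣ`).  Then the first
group cohomology `H¹(G, ℂˣ)` (inhomogeneous 1-cocycles modulo 1-coboundaries) is
isomorphic to `ℤ/2ℤ`. -/
theorem statement10 {G : Type} [Group G] [Fintype G] (hG : Fintype.card G = 2)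
    (ρ : Representation ℤ G (Additive ℂˣ))
    (hρ : ∀ g : G, g ≠ 1 → ∀ z : ℂˣ,
      ρ g (Additive.ofMul z) =
        Additive.ofMul ((Units.map (starRingEnd ℂ).toMonoidHom z)⁻¹)) :
    Nonempty (groupCohomology.H1 (Rep.of ρ) ≃+ ZMod 2) := by
  obtain ⟨g, hg⟩ := Fintype.exists_ne_of_one_lt_card (by omega) (1 : G)
  have hcard := card_H1_eq_two hG hg (hρ g hg)
  have : IsAddCyclic (groupCohomology.H1 (Rep.of ρ)) := isAddCyclic_of_prime_card (p := 2) hcard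
  exact ⟨addEquivOfAddCyclicCardEq (hcard.trans (Nat.card_zmod 2).symm)⟩
end
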